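/- Let w : [t₀,∞) → ℝ satisfy: for all sufficiently large τ with η(τ) := sup_{[τ,τ+L]} |w| small enough, there exists s with |s| ≤ B η(τ) and η(τ + L + s) ≤ (1/2) η(τ). Assume additionally η(τ₀) ≤ min{δ₀, L/(2B)} for some admissible starting time τ₀, and |w| is Lipschitz with constant M. Then there exist constants C > 0 and α > 0 and a shift σ with |σ| ≤ L such that |w(t + σ)| ≤ C e^{-α (t - τ₀)} for all t ≥ τ₀, where α = (log 2)/L. (Iteration lemma converting an 'improvement of approximation' step into exponential decay.) -/

import Mathlib

open Real

/-!
With `η = windowSup w L`, iterating the improvement step from `τ₀` gives times `T 0 = τ₀`,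
`T (n + 1) = T n + L + sₙ` with `η (T n) ≤ η τ₀ / 2 ^ n` and `|sₙ| ≤ B η (T n) ≤ L / 2 ^ (n + 1)`;
the smallness of `η τ₀` keeps every `T n` admissible for the next step. So `T n` stays within `L`
of `τ₀ + n L`, and on `[T n, T (n + 1)]` (a window plus a gap of length `|sₙ|`, controlled by the
Lipschitz bound) `|w| ≤ (η τ₀ + M L) / 2 ^ n`. As the shift only has to satisfy `|σ| ≤ L`, the
drift of `T n` is absorbed into the constant and `σ = 0` works.
-/

noncomputable def windowSup (w : ℝ → ℝ) (L τ : ℝ) : ℝ :=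
  sSup ((fun t => |w t|) '' Set.Icc τ (τ + L))

open Set

theorem windowSup_nonneg (w : ℝ → ℝ) (L τ : ℝ) : 0 ≤ windowSup w L τ :=
  Real.sSup_nonneg <| by rintro _ ⟨t, -, rfl⟩; exact abs_nonneg _

theorem abs_le_windowSup {w : ℝ → ℝ} (hw : Continuous w) {L τ t : ℝ} (ht : t ∈ Icc τ (τ + L)) :
    |w t| ≤ windowSup w L τ :=
  le_csSup (isCompact_Icc.bddAbove_image hw.abs.continuousOn) (mem_image_of_mem _ ht)

section Lipschitz

variable {w : ℝ → ℝ} {M : ℝ}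

theorem continuous_of_abs_sub_le_mul (hLip : ∀ s t, |w s - w t| ≤ M * |s - t|) : Continuous w :=
  (LipschitzWith.of_dist_le' (K := M) hLip).continuous

theorem nonneg_of_abs_sub_le_mul (hLip : ∀ s t, |w s - w t| ≤ M * |s - t|) : 0 ≤ M := by
  simpa using (abs_nonneg _).trans (hLip 1 0)

theorem abs_le_windowSup_add (hLip : ∀ s t, |w s - w t| ≤ M * |s - t|) {L τ d x : ℝ}
    (hL : 0 ≤ L) (hd : 0 ≤ d) (hx₁ : τ - d ≤ x) (hx₂ : x ≤ τ + L + d) :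
    |w x| ≤ windowSup w L τ + M * d := by
  set y := max τ (min x (τ + L))
  have hy : y ∈ Icc τ (τ + L) := ⟨le_max_left _ _, max_le (by linarith) (min_le_right _ _)⟩
  have hxy : |x - y| ≤ d := by
    rcases le_total x (τ + L) with h | h <;> rcases le_total τ x with h' | h' <;>
      simp only [y, abs_le, *, le_add_iff_nonneg_right, min_eq_left, min_eq_right, max_eq_left,
        max_eq_right] <;>
      constructor <;> linarith
  calc |w x| ≤ |w y| + |w x - w y| := by linarith [abs_sub_abs_le_abs_sub (w x) (w y)]
    _ ≤ windowSup w L τ + M * d :=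
      add_le_add (abs_le_windowSup (continuous_of_abs_sub_le_mul hLip) hy)
        ((hLip x y).trans (mul_le_mul_of_nonneg_left hxy (nonneg_of_abs_sub_le_mul hLip)))

end Lipschitz

theorem inv_two_pow_le_exp {L x : ℝ} {j : ℕ} (hL : 0 < L) (hx : x ≤ j * L) :
    ((2 : ℝ) ^ j)⁻¹ ≤ exp (-(log 2 / L) * x) := by
  calc ((2 : ℝ) ^ j)⁻¹ = exp (-(log 2 / L) * (j * L)) := by
        rw [show -(log 2 / L) * (j * L) = -(j * log 2) by field_simp, exp_neg, exp_nat_mul,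
          exp_log two_pos]
    _ ≤ exp (-(log 2 / L) * x) := by
        gcongr exp ?_
        exact mul_le_mul_of_nonpos_left hx (neg_nonpos.2 (div_pos (log_pos one_lt_two) hL).le)

theorem exists_le_and_lt_succ {α : Type*} [LinearOrder α] {T : ℕ → α} {x : α} (h₀ : T 0 ≤ x)
    (hx : ∃ n, x < T n) : ∃ j, T j ≤ x ∧ x < T (j + 1) := by
  by_contra! h
  obtain ⟨n, hn⟩ := hx
  exact (Nat.rec h₀ (fun k hk => h k hk) n : T n ≤ x).not_gt hn

theorem abs_sub_add_mul_le_of_abs_succ_sub_le {T : ℕ → ℝ} {L : ℝ}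
    (hT : ∀ n, |T (n + 1) - (T n + L)| ≤ L / 2 ^ (n + 1)) (n : ℕ) :
    |T n - (T 0 + n * L)| ≤ L - L / 2 ^ n := by
  induction n with
  | zero => simp
  | succ n ih =>
    calc |T (n + 1) - (T 0 + ↑(n + 1) * L)|
        = |(T n - (T 0 + n * L)) + (T (n + 1) - (T n + L))| := by push_cast; ring_nf
      _ ≤ |T n - (T 0 + n * L)| + |T (n + 1) - (T n + L)| := abs_add_le _ _
      _ ≤ L - L / 2 ^ (n + 1) := by
          have := hT n
          rw [pow_succ, ← div_div] at this ⊢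
          linarith

theorem exists_halving_times {η : ℝ → ℝ} {t₀ L B δ τ₀ : ℝ}
    (hstep : ∀ τ, t₀ ≤ τ → η τ ≤ δ → ∃ s, |s| ≤ B * η τ ∧ η (τ + L + s) ≤ η τ / 2)
    (hB : 0 ≤ B) (hη₀ : 0 ≤ η τ₀) (hτ₀ : t₀ ≤ τ₀) (hδ : η τ₀ ≤ δ) (hsmall : B * η τ₀ ≤ L / 2) :
    ∃ T : ℕ → ℝ, T 0 = τ₀ ∧
      ∀ n, η (T n) ≤ η τ₀ / 2 ^ n ∧ |T (n + 1) - (T n + L)| ≤ L / 2 ^ (n + 1) := by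
  -- a step that does not depend on the proofs of admissibility, so that it can be iterated
  have hstep' : ∀ τ, ∃ s, t₀ ≤ τ → η τ ≤ δ → |s| ≤ B * η τ ∧ η (τ + L + s) ≤ η τ / 2 := fun τ => by
    by_cases h : t₀ ≤ τ ∧ η τ ≤ δ
    · obtain ⟨s, hs⟩ := hstep τ h.1 h.2; exact ⟨s, fun _ _ => hs⟩
    · exact ⟨0, fun h₁ h₂ => absurd ⟨h₁, h₂⟩ h⟩
  choose s hs using hstep'
  set T : ℕ → ℝ := fun n => (fun τ => τ + L + s τ)^[n] τ₀
  have hTsucc : ∀ n, T (n + 1) = T n + L + s (T n) := fun n => Function.iterate_succ_apply' _ _ _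
  have hs_le : ∀ n, t₀ ≤ T n → η (T n) ≤ η τ₀ / 2 ^ n →
      |s (T n)| ≤ L / 2 ^ (n + 1) ∧ η (T (n + 1)) ≤ η τ₀ / 2 ^ (n + 1) := fun n h₁ h₂ => by
    have hle : η (T n) ≤ δ := h₂.trans ((div_le_self hη₀ (one_le_pow₀ one_le_two)).trans hδ)
    obtain ⟨hs₁, hs₂⟩ := hs _ h₁ hle
    rw [hTsucc, pow_succ', ← div_div, ← div_div]
    refine ⟨hs₁.trans ?_, hs₂.trans (by rw [div_right_comm]; linarith)⟩
    calc B * η (T n) ≤ B * η τ₀ / 2 ^ n := by rw [mul_div_assoc]; gcongr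
      _ ≤ L / 2 / 2 ^ n := by gcongr
  have hinv : ∀ n, t₀ ≤ T n ∧ η (T n) ≤ η τ₀ / 2 ^ n := fun n => by
    induction n with
    | zero => simpa [T] using hτ₀
    | succ n ih =>
      obtain ⟨h₁, h₂⟩ := hs_le n ih.1 ih.2
      refine ⟨?_, h₂⟩
      rw [hTsucc]
      have : L / 2 ^ (n + 1) ≤ L :=
        div_le_self (by linarith [mul_nonneg hB hη₀]) (one_le_pow₀ one_le_two)
      linarith [neg_abs_le (s (T n))]
  refine ⟨T, rfl, fun n => ⟨(hinv n).2, ?_⟩⟩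
  rw [hTsucc, add_sub_cancel_left]
  exact (hs_le n (hinv n).1 (hinv n).2).1

theorem exists_abs_le_div_two_pow {w : ℝ → ℝ} {M L K t : ℝ}
    (hLip : ∀ s t, |w s - w t| ≤ M * |s - t|) (hL : 0 < L) {T : ℕ → ℝ}
    (hT : ∀ n, windowSup w L (T n) ≤ K / 2 ^ n ∧ |T (n + 1) - (T n + L)| ≤ L / 2 ^ (n + 1))
    (ht : T 0 ≤ t) : ∃ j : ℕ, t - T 0 ≤ (j + 2) * L ∧ |w t| ≤ (K + M * L) / 2 ^ j := by
  have hdrift : ∀ n, |T n - (T 0 + n * L)| ≤ L := fun n =>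
    (abs_sub_add_mul_le_of_abs_succ_sub_le (fun n => (hT n).2) n).trans
      (sub_le_self _ (by positivity))
  obtain ⟨n, hn⟩ : ∃ n, t < T n := by
    obtain ⟨n, hn⟩ := exists_nat_gt ((t - T 0) / L + 1)
    refine ⟨n, ?_⟩
    have := (div_lt_iff₀ hL).1 (lt_sub_iff_add_lt.2 hn)
    linarith [(abs_le.1 (hdrift n)).1]
  obtain ⟨j, hjt, htj⟩ := exists_le_and_lt_succ ht ⟨n, hn⟩
  have hgap : |T (j + 1) - (T j + L)| ≤ L / 2 ^ j :=
    (hT j).2.trans <| div_le_div_of_nonneg_left hL.le (by positivity)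
      (pow_le_pow_right₀ one_le_two j.le_succ)
  refine ⟨j, ?_, ?_⟩
  · have := (abs_le.1 (hdrift (j + 1))).2
    push_cast at this
    linarith
  · calc |w t| ≤ windowSup w L (T j) + M * (L / 2 ^ j) :=
          abs_le_windowSup_add hLip hL.le (by positivity)
            (by linarith [div_nonneg hL.le (pow_nonneg zero_le_two j)])
            (by linarith [(abs_le.1 hgap).2])
      _ ≤ K / 2 ^ j + M * (L / 2 ^ j) := by gcongr; exact (hT j).1
      _ = (K + M * L) / 2 ^ j := by ring

theorem iteration_lemma_general (w : ℝ → ℝ) (t₀ L B δ₀ M : ℝ)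
    (hL : 0 < L) (hB : 0 < B)
    (hLip : ∀ s t : ℝ, |w s - w t| ≤ M * |s - t|)
    (hstep : ∀ τ, t₀ ≤ τ → windowSup w L τ ≤ δ₀ →
      ∃ s : ℝ, |s| ≤ B * windowSup w L τ ∧ windowSup w L (τ + L + s) ≤ windowSup w L τ / 2)
    (τ₀ : ℝ) (hτ₀ : t₀ ≤ τ₀)
    (hsmall : windowSup w L τ₀ ≤ min δ₀ (L / (2 * B))) :
    ∃ C > 0, ∃ σ : ℝ, |σ| ≤ L ∧
      ∀ t, τ₀ ≤ t → |w (t + σ)| ≤ C * Real.exp (-(Real.log 2 / L) * (t - τ₀)) := by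
  have hη₀ := windowSup_nonneg w L τ₀
  have hM := nonneg_of_abs_sub_le_mul hLip
  have hBη : B * windowSup w L τ₀ ≤ L / 2 := by
    have := (le_div_iff₀ (by positivity)).1 (hsmall.trans (min_le_right _ _))
    linarith
  obtain ⟨T, rfl, hT⟩ :=
    exists_halving_times hstep hB.le hη₀ hτ₀ (hsmall.trans (min_le_left _ _)) hBη
  set K := windowSup w L (T 0) + M * L
  refine ⟨4 * K + 1, by positivity, 0, by simpa using hL.le, fun t ht => ?_⟩
  obtain ⟨j, htj, hwt⟩ := exists_abs_le_div_two_pow hLip hL hT ht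
  rw [add_zero]
  calc |w t| ≤ K / 2 ^ j := hwt
    _ = 4 * K * ((2 : ℝ) ^ (j + 2))⁻¹ := by rw [pow_add]; ring
    _ ≤ 4 * K * exp (-(log 2 / L) * (t - T 0)) := by
        gcongr
        exact inv_two_pow_le_exp hL (by push_cast; linarith)
    _ ≤ (4 * K + 1) * exp (-(log 2 / L) * (t - T 0)) := by gcongr; linarith

/-- the iteration lemma converting an `improvement of approximation' step into
exponential decay after a bounded shift `σ`. -/
theorem iteration_lemma (w : ℝ → ℝ) (t₀ L B δ₀ M : ℝ)
    (hL : 0 < L) (hB : 0 < B) (hδ₀ : 0 < δ₀)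
    (hLip : ∀ s t : ℝ, |w s - w t| ≤ M * |s - t|)
    (hstep : ∀ τ, t₀ ≤ τ → windowSup w L τ ≤ δ₀ →
      ∃ s : ℝ, |s| ≤ B * windowSup w L τ ∧ windowSup w L (τ + L + s) ≤ windowSup w L τ / 2)
    (τ₀ : ℝ) (hτ₀ : t₀ ≤ τ₀)
    (hsmall : windowSup w L τ₀ ≤ min δ₀ (L / (2 * B))) :
    ∃ C > 0, ∃ σ : ℝ, |σ| ≤ L ∧
      ∀ t, τ₀ ≤ t → |w (t + σ)| ≤ C * Real.exp (-(Real.log 2 / L) * (t - τ₀)) :=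
  iteration_lemma_general w t₀ L B δ₀ M hL hB hLip hstep τ₀ hτ₀ hsmall
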